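/- arXiv:1801.07619 — 2 statements merged into one kernel-verified Lean document; each statement's English description precedes it below -/
import Mathlib

section
/- Let A = [a_{ij}] ∈ M_n(ℂ) be a positive semidefinite matrix. Then the norm of the Schur multiplier operator S_A induced by the numerical radius equals the largest diagonal entry of A: sup{ ω(A ∘ X)/ω(X) : X ∈ M_n(ℂ), X ≠ 0 } = max_i a_{ii}. -/
set_option maxHeartbeats 1000000


open scoped ComplexOrder

/-- The numerical radius of a complex matrix. -/
noncomputable def numRadius {ι : Type*} [Fintype ι] (A : Matrix ι ι ℂ) : ℝ :=
  sSup {r : ℝ | ∃ x : EuclideanSpace ℂ ι, ‖x‖ = 1 ∧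
    r = ‖(dotProduct (star (x : ι → ℂ)) (A.mulVec x))‖}

/-- `f` is a Kwong function on `(0, ∞)`: for all `m` and all distinct positive
`λ₁, …, λ_m`, the matrix `((f λᵢ + f λⱼ)/(λᵢ + λⱼ))ᵢⱼ` is positive semidefinite. -/
def IsKwong (f : ℝ → ℝ) : Prop :=
  ∀ (m : ℕ) (lam : Fin m → ℝ), (∀ i, 0 < lam i) → Function.Injective lam →
    (Matrix.of fun i j : Fin m => (f (lam i) + f (lam j)) / (lam i + lam j)).PosSemidef

/-- `f` is operator monotone on the interval `J` (in the Loewner order). -/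
def IsOperatorMonotoneOn (f : ℝ → ℝ) (J : Set ℝ) : Prop :=
  ∀ (m : ℕ) (A B : Matrix (Fin m) (Fin m) ℂ), A.IsHermitian → B.IsHermitian →
    spectrum ℝ A ⊆ J → spectrum ℝ B ⊆ J → (B - A).PosSemidef →
    (cfc f B - cfc f A).PosSemidef

section Helpers
open Matrix Complex Finset

variable {n : ℕ}

lemma normsq_sum (x : EuclideanSpace ℂ (Fin n)) : ∑ i, ‖x i‖ ^ 2 = ‖x‖ ^ 2 := by
  rw [PiLp.norm_sq_eq_of_L2]

lemma quad_expand (A : Matrix (Fin n) (Fin n) ℂ) (x : Fin n → ℂ) :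
    dotProduct (star x) (A.mulVec x)
      = ∑ i, ∑ j, (starRingEnd ℂ) (x i) * A i j * x j := by
  simp [dotProduct, Matrix.mulVec, Finset.mul_sum, mul_assoc]

lemma abs_quad_le (A : Matrix (Fin n) (Fin n) ℂ) {x : EuclideanSpace ℂ (Fin n)}
    (hx : ‖x‖ = 1) :
    ‖dotProduct (star (x : Fin n → ℂ)) (A.mulVec x)‖
      ≤ ∑ i, ∑ j, ‖A i j‖ := by
  have hxi : ∀ i, ‖x i‖ ≤ 1 := by
    intro i
    have h1 : ‖x i‖ ^ 2 ≤ 1 := by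
      have := normsq_sum x
      rw [hx] at this
      calc ‖x i‖ ^ 2 ≤ ∑ j, ‖x j‖ ^ 2 :=
            Finset.single_le_sum (f := fun j => ‖x j‖ ^ 2) (fun j _ => by positivity) (Finset.mem_univ i)
        _ = 1 := by rw [this]; norm_num
    nlinarith [norm_nonneg (x i)]
  rw [quad_expand]
  calc ‖∑ i, ∑ j, (starRingEnd ℂ) (x i) * A i j * x j‖
      ≤ ∑ i, ∑ j, ‖(starRingEnd ℂ) (x i) * A i j * x j‖ := by
        refine (norm_sum_le _ _).trans (Finset.sum_le_sum fun i _ => norm_sum_le _ _)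
    _ ≤ ∑ i, ∑ j, ‖A i j‖ := by
        refine Finset.sum_le_sum fun i _ => Finset.sum_le_sum fun j _ => ?_
        rw [norm_mul, norm_mul, Complex.norm_conj]
        calc ‖x i‖ * ‖A i j‖ * ‖x j‖
            ≤ 1 * ‖A i j‖ * 1 := by
              gcongr <;> [exact hxi i; exact hxi j]
          _ = ‖A i j‖ := by ring

lemma numRadius_bdd (A : Matrix (Fin n) (Fin n) ℂ) :
    BddAbove {r : ℝ | ∃ x : EuclideanSpace ℂ (Fin n), ‖x‖ = 1 ∧
      r = ‖dotProduct (star (x : Fin n → ℂ)) (A.mulVec x)‖} :=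
  ⟨∑ i, ∑ j, ‖A i j‖, by rintro r ⟨x, hx, rfl⟩; exact abs_quad_le A hx⟩

lemma numRadius_nonempty (hn : 0 < n) (A : Matrix (Fin n) (Fin n) ℂ) :
    ({r : ℝ | ∃ x : EuclideanSpace ℂ (Fin n), ‖x‖ = 1 ∧
      r = ‖dotProduct (star (x : Fin n → ℂ)) (A.mulVec x)‖}).Nonempty :=
  ⟨_, EuclideanSpace.single ⟨0, hn⟩ (1:ℂ), by simp [EuclideanSpace.norm_single], rfl⟩

lemma le_numRadius (A : Matrix (Fin n) (Fin n) ℂ) {x : EuclideanSpace ℂ (Fin n)}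
    (hx : ‖x‖ = 1) :
    ‖dotProduct (star (x : Fin n → ℂ)) (A.mulVec x)‖ ≤ numRadius A :=
  le_csSup (numRadius_bdd A) ⟨x, hx, rfl⟩

lemma numRadius_nonneg (hn : 0 < n) (A : Matrix (Fin n) (Fin n) ℂ) : 0 ≤ numRadius A := by
  obtain ⟨r, x, hx, rfl⟩ := numRadius_nonempty hn A
  exact (norm_nonneg _).trans (le_numRadius A hx)

lemma numRadius_le (hn : 0 < n) (A : Matrix (Fin n) (Fin n) ℂ) {M : ℝ}
    (h : ∀ x : EuclideanSpace ℂ (Fin n), ‖x‖ = 1 →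
      ‖dotProduct (star (x : Fin n → ℂ)) (A.mulVec x)‖ ≤ M) :
    numRadius A ≤ M :=
  csSup_le (numRadius_nonempty hn A) (by rintro r ⟨x, hx, rfl⟩; exact h x hx)

lemma quad_smul_le (hn : 0 < n) (A : Matrix (Fin n) (Fin n) ℂ) (y : Fin n → ℂ) :
    ‖dotProduct (star y) (A.mulVec y)‖
      ≤ numRadius A * ∑ i, ‖y i‖ ^ 2 := by
  by_cases hy : y = 0
  · simp [hy, dotProduct]
  · set c : ℝ := Real.sqrt (∑ i, ‖y i‖ ^ 2) with hc
    have hsum : 0 < ∑ i, ‖y i‖ ^ 2 := by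
      have h0 : ∃ i, y i ≠ 0 := by
        by_contra h
        push_neg at h
        exact hy (funext h)
      obtain ⟨i, hi⟩ := h0
      have : 0 < ‖y i‖ ^ 2 := pow_pos (norm_pos_iff.mpr hi) 2
      exact this.trans_le (Finset.single_le_sum
        (f := fun j => ‖y j‖ ^ 2) (fun j _ => by positivity) (Finset.mem_univ i))
    have hcpos : 0 < c := Real.sqrt_pos.mpr hsum
    have hc2 : c ^ 2 = ∑ i, ‖y i‖ ^ 2 := Real.sq_sqrt hsum.le
    set u : EuclideanSpace ℂ (Fin n) := WithLp.toLp 2 (fun i => ((c : ℂ))⁻¹ * y i) with hu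
    have hnu : ‖u‖ = 1 := by
      have h2 : ‖u‖ ^ 2 = 1 := by
        rw [PiLp.norm_sq_eq_of_L2]
        simp only [hu]
        have : ∀ i, ‖(c:ℂ)⁻¹ * y i‖ ^ 2 = (c⁻¹)^2 * ‖y i‖ ^ 2 := by
          intro i
          rw [norm_mul, norm_inv, Complex.norm_real, Real.norm_eq_abs, abs_of_pos hcpos]
          ring
        rw [Finset.sum_congr rfl fun i _ => this i, ← Finset.mul_sum, ← hc2]
        field_simp
      nlinarith [norm_nonneg u]
    have hquad : dotProduct (star (u : Fin n → ℂ)) (A.mulVec u)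
        = ((c:ℂ))⁻¹ * ((c:ℂ))⁻¹ * dotProduct (star y) (A.mulVec y) := by
      rw [quad_expand, quad_expand, Finset.mul_sum]
      refine Finset.sum_congr rfl fun i _ => ?_
      rw [Finset.mul_sum]
      refine Finset.sum_congr rfl fun j _ => ?_
      simp only [hu, _root_.map_mul]
      have : (starRingEnd ℂ) ((c:ℂ))⁻¹ = ((c:ℂ))⁻¹ := by
        rw [map_inv₀, Complex.conj_ofReal]
      rw [this]; ring
    have hle := le_numRadius A hnu
    rw [hquad] at hle
    rw [norm_mul, norm_mul, norm_inv, Complex.norm_real, Real.norm_eq_abs, abs_of_pos hcpos] at hle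
    rw [← hc2]
    set q : ℝ := ‖dotProduct (star y) (A.mulVec y)‖ with hq
    have hqnn : 0 ≤ q := norm_nonneg _
    have h3 : q = c ^ 2 * (c⁻¹ * c⁻¹ * q) := by field_simp
    have h4 : c ^ 2 * (c⁻¹ * c⁻¹ * q) ≤ c ^ 2 * numRadius A :=
      mul_le_mul_of_nonneg_left hle (sq_nonneg c)
    rw [h3]
    linarith [h4]

lemma quad_std (c : ℂ) (i₀ : Fin n) (x : Fin n → ℂ) :
    dotProduct (star x) ((Matrix.single i₀ i₀ c).mulVec x)
      = (starRingEnd ℂ) (x i₀) * c * x i₀ := by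
  rw [quad_expand]
  rw [Finset.sum_eq_single i₀]
  · rw [Finset.sum_eq_single i₀]
    · simp [Matrix.single_apply_same]
    · intro j _ hj
      rw [Matrix.single_apply_of_ne i₀ i₀ c i₀ j (fun h => hj h.2.symm)]
      ring
    · simp
  · intro i _ hi
    rw [Finset.sum_eq_zero]
    intro j _
    rw [Matrix.single_apply_of_ne i₀ i₀ c i j (fun h => hi h.1.symm)]
    ring
  · simp

lemma numRadius_std (hn : 0 < n) (i₀ : Fin n) (c : ℝ) (hc : 0 ≤ c) :
    numRadius (Matrix.single i₀ i₀ (c : ℂ)) = c := by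
  apply le_antisymm
  · apply numRadius_le hn
    intro x hx
    rw [quad_std]
    rw [norm_mul, norm_mul, Complex.norm_conj, Complex.norm_real, Real.norm_eq_abs, _root_.abs_of_nonneg hc]
    have hxi : ‖x i₀‖ ^ 2 ≤ 1 := by
      have := normsq_sum x
      rw [hx] at this
      calc ‖x i₀‖ ^ 2 ≤ ∑ j, ‖x j‖ ^ 2 :=
            Finset.single_le_sum (f := fun j => ‖x j‖ ^ 2)
              (fun j _ => by positivity) (Finset.mem_univ i₀)
        _ = 1 := by rw [this]; norm_num
    nlinarith [norm_nonneg (x i₀)]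
  · have h := le_numRadius (Matrix.single i₀ i₀ (c : ℂ))
      (x := EuclideanSpace.single i₀ (1:ℂ)) (by simp [EuclideanSpace.norm_single])
    rw [quad_std] at h
    simpa [_root_.abs_of_nonneg hc] using h

lemma diag_eq (A : Matrix (Fin n) (Fin n) ℂ) (hA : A.PosSemidef) (i : Fin n) :
    A i i = ((A i i).re : ℂ) ∧ 0 ≤ (A i i).re := by
  have h := hA.dotProduct_mulVec_nonneg (Pi.single i 1)
  have heq : dotProduct (star (Pi.single i 1 : Fin n → ℂ))
      (A.mulVec (Pi.single i 1)) = A i i := by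
    rw [quad_expand]
    rw [Finset.sum_eq_single i]
    · rw [Finset.sum_eq_single i]
      · simp
      · intro j _ hj; simp [Pi.single_apply, hj]
      · simp
    · intro k _ hk
      rw [Finset.sum_eq_zero]
      intro j _
      simp [Pi.single_apply, hk]
    · simp
  rw [heq] at h
  rw [Complex.le_def] at h
  simp only [Complex.zero_re, Complex.zero_im] at h
  exact ⟨Complex.ext rfl h.2.symm, h.1⟩

open scoped MatrixOrder in
lemma schur_ub (hn : 0 < n) (A X : Matrix (Fin n) (Fin n) ℂ) (hA : A.PosSemidef) :
    numRadius (Matrix.hadamard A X) ≤ (⨆ i : Fin n, (A i i).re) * numRadius X := by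
  have : Nonempty (Fin n) := ⟨⟨0, hn⟩⟩
  set M := ⨆ i : Fin n, (A i i).re with hMdef
  have hM : ∀ i, (A i i).re ≤ M := by
    intro i
    rw [hMdef]
    exact le_ciSup (Set.Finite.bddAbove (Set.finite_range fun j => (A j j).re)) i
  set B := CFC.sqrt A with hBdef
  have hB : B * B = A := CFC.sqrt_mul_sqrt_self A hA.nonneg
  have hBH : Bᴴ = B := (CFC.sqrt_nonneg A).posSemidef.isHermitian
  have hconj : ∀ k i : Fin n, (starRingEnd ℂ) (B k i) = B i k := by
    intro k i
    conv_rhs => rw [← hBH]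
    simp [Matrix.conjTranspose_apply]
  apply numRadius_le hn
  intro x hx
  have key : dotProduct (star (x : Fin n → ℂ)) ((Matrix.hadamard A X).mulVec x)
      = ∑ k, dotProduct (star (fun i => B k i * x i))
          (X.mulVec (fun i => B k i * x i)) := by
    rw [quad_expand]
    have step1 : ∀ i j : Fin n, (starRingEnd ℂ) (x i) * (Matrix.hadamard A X) i j * x j
        = ∑ k, (starRingEnd ℂ) (B k i * x i) * X i j * (B k j * x j) := by
      intro i j
      have hAij : A i j = ∑ k, (starRingEnd ℂ) (B k i) * B k j := by
        rw [← hB, Matrix.mul_apply]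
        exact Finset.sum_congr rfl fun k _ => by rw [hconj k i]
      rw [Matrix.hadamard_apply, hAij]
      simp only [Finset.sum_mul, Finset.mul_sum, _root_.map_mul]
      exact Finset.sum_congr rfl fun k _ => by ring
    calc ∑ i, ∑ j, (starRingEnd ℂ) (x i) * (Matrix.hadamard A X) i j * x j
        = ∑ i, ∑ j, ∑ k, (starRingEnd ℂ) (B k i * x i) * X i j * (B k j * x j) := by
          exact Finset.sum_congr rfl fun i _ => Finset.sum_congr rfl fun j _ => step1 i j
      _ = ∑ k, ∑ i, ∑ j, (starRingEnd ℂ) (B k i * x i) * X i j * (B k j * x j) := by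
          exact Eq.trans (Finset.sum_congr rfl fun i _ => Finset.sum_comm) Finset.sum_comm
      _ = ∑ k, dotProduct (star (fun i => B k i * x i))
            (X.mulVec (fun i => B k i * x i)) :=
          Finset.sum_congr rfl fun k _ => (quad_expand X _).symm
  rw [key]
  have hdiag : ∀ i, ∑ k, ‖B k i‖ ^ 2 = (A i i).re := by
    intro i
    have h1 : A i i = ((∑ k, ‖B k i‖ ^ 2 : ℝ) : ℂ) := by
      rw [← hB, Matrix.mul_apply]
      push_cast
      refine Finset.sum_congr rfl fun k _ => ?_
      rw [← hconj k i, Complex.conj_mul']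
    rw [h1, Complex.ofReal_re]
  calc ‖∑ k, dotProduct (star (fun i => B k i * x i))
          (X.mulVec (fun i => B k i * x i))‖
      ≤ ∑ k, ‖dotProduct (star (fun i => B k i * x i))
          (X.mulVec (fun i => B k i * x i))‖ := norm_sum_le _ _
    _ ≤ ∑ k, numRadius X * ∑ i, ‖B k i * x i‖ ^ 2 :=
        Finset.sum_le_sum fun k _ => quad_smul_le hn X _
    _ = numRadius X * ∑ i, (‖x i‖ ^ 2 * (A i i).re) := by
        rw [← Finset.mul_sum]
        congr 1
        rw [Finset.sum_comm]
        refine Finset.sum_congr rfl fun i _ => ?_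
        rw [← hdiag i, Finset.mul_sum]
        refine Finset.sum_congr rfl fun k _ => ?_
        rw [norm_mul]
        ring
    _ ≤ numRadius X * ∑ i, (‖x i‖ ^ 2 * M) := by
        refine mul_le_mul_of_nonneg_left (Finset.sum_le_sum fun i _ => ?_)
          (numRadius_nonneg hn X)
        exact mul_le_mul_of_nonneg_left (hM i) (by positivity)
    _ = M * numRadius X := by
        rw [← Finset.sum_mul, normsq_sum, hx]
        ring


theorem stmt_14 {n : ℕ} (hn : 0 < n) (A : Matrix (Fin n) (Fin n) ℂ) (hA : A.PosSemidef) :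
    sSup {r : ℝ | ∃ X : Matrix (Fin n) (Fin n) ℂ, X ≠ 0 ∧
        r = numRadius (Matrix.hadamard A X) / numRadius X} =
      ⨆ i : Fin n, (A i i).re := by
  have hne : Nonempty (Fin n) := ⟨⟨0, hn⟩⟩
  obtain ⟨i₀, -, hi₀⟩ := Finset.exists_max_image (Finset.univ : Finset (Fin n))
    (fun i => (A i i).re) ⟨⟨0, hn⟩, Finset.mem_univ _⟩
  set a := (A i₀ i₀).re with ha
  have ha0 : 0 ≤ a := (diag_eq A hA i₀).2
  have hMa : (⨆ i : Fin n, (A i i).re) = a := by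
    apply le_antisymm
    · exact ciSup_le fun i => hi₀ i (Finset.mem_univ i)
    · exact le_ciSup (Set.Finite.bddAbove (Set.finite_range fun j => (A j j).re)) i₀
  set X0 := Matrix.single i₀ i₀ (1 : ℂ) with hX0def
  have hX0 : X0 ≠ 0 := by
    intro h
    have h2 := congrFun (congrFun h i₀) i₀
    rw [hX0def] at h2
    simp [Matrix.single_apply_same] at h2
  have hAX0 : Matrix.hadamard A X0 = Matrix.single i₀ i₀ ((a : ℝ) : ℂ) := by
    ext i j
    by_cases hij : i₀ = i ∧ i₀ = j
    · obtain ⟨rfl, rfl⟩ := hij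
      rw [Matrix.hadamard_apply, hX0def, Matrix.single_apply_same,
        Matrix.single_apply_same, mul_one]
      exact (diag_eq A hA i₀).1
    · rw [Matrix.hadamard_apply, hX0def, Matrix.single_apply_of_ne i₀ i₀ (1:ℂ) i j hij,
        Matrix.single_apply_of_ne i₀ i₀ ((a : ℝ) : ℂ) i j hij, mul_zero]
  have hrX0 : numRadius X0 = 1 := by
    have h := numRadius_std hn i₀ 1 zero_le_one
    rw [hX0def]
    simpa using h
  have hrAX0 : numRadius (Matrix.hadamard A X0) = a := by
    rw [hAX0]; exact numRadius_std hn i₀ a ha0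
  have hmem : a ∈ {r : ℝ | ∃ X : Matrix (Fin n) (Fin n) ℂ, X ≠ 0 ∧
      r = numRadius (Matrix.hadamard A X) / numRadius X} :=
    ⟨X0, hX0, by rw [hrAX0, hrX0, div_one]⟩
  have hbound : ∀ X : Matrix (Fin n) (Fin n) ℂ,
      numRadius (Matrix.hadamard A X) / numRadius X ≤ a := by
    intro X
    by_cases h0 : numRadius X = 0
    · rw [h0, div_zero]; exact ha0
    · have hpos : 0 < numRadius X := lt_of_le_of_ne (numRadius_nonneg hn X) (Ne.symm h0)
      rw [div_le_iff₀ hpos]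
      have h := schur_ub hn A X hA
      rwa [hMa] at h
  rw [hMa]
  apply le_antisymm
  · apply csSup_le ⟨a, hmem⟩
    rintro r ⟨X, -, rfl⟩
    exact hbound X
  · exact le_csSup ⟨a, by rintro r ⟨X, -, rfl⟩; exact hbound X⟩ hmem

end Helpers
end

section
/- Let X, Y ∈ M_n(ℂ), and let T be the 2n×2n block matrix with zero diagonal blocks, upper-right block X, and lower-left block Y. Then max{ ω(X+Y), ω(X−Y) } / 2 ≤ ω(T) ≤ ( ω(X+Y) + ω(X−Y) ) / 2. -/
open scoped ComplexOrder

variable {ι : Type*} [Fintype ι]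

lemma coord_le_one (x : EuclideanSpace ℂ ι) (hx : ‖x‖ = 1) (i : ι) : ‖(x i)‖ ≤ 1 := by
  have h : ‖x i‖ ^ 2 ≤ ∑ j, ‖x j‖ ^ 2 :=
    Finset.single_le_sum (f := fun j => ‖x j‖ ^ 2) (fun j _ => sq_nonneg _) (Finset.mem_univ i)
  have h2 : ∑ j, ‖x j‖ ^ 2 = 1 := by
    have := EuclideanSpace.norm_eq x
    rw [hx] at this
    nlinarith [Real.sq_sqrt (Finset.sum_nonneg (fun j (_ : j ∈ Finset.univ) => sq_nonneg ‖x j‖)),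
      Real.sqrt_nonneg (∑ j, ‖x j‖ ^ 2)]
  rw [h2] at h
  have := norm_nonneg (x i)
  nlinarith

lemma nr_bddAbove (A : Matrix ι ι ℂ) : BddAbove {r : ℝ | ∃ x : EuclideanSpace ℂ ι, ‖x‖ = 1 ∧
    r = ‖(dotProduct (star (x : ι → ℂ)) (A.mulVec x))‖} := by
  refine ⟨∑ i, ∑ j, ‖(A i j)‖, ?_⟩
  rintro r ⟨x, hx, rfl⟩
  have h1 : ∀ i, ‖(x i)‖ ≤ 1 := coord_le_one x hx
  calc ‖(dotProduct (star (x : ι → ℂ)) (A.mulVec x))‖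
      ≤ ∑ i, ‖(star (x i) * (A.mulVec x) i)‖ :=
        norm_sum_le _ _
    _ ≤ ∑ i, ∑ j, ‖(A i j)‖ := by
        refine Finset.sum_le_sum fun i _ => ?_
        rw [norm_mul]
        calc ‖(star (x i))‖ * ‖((A.mulVec x) i)‖
            ≤ 1 * ‖((A.mulVec x) i)‖ := by
              gcongr
              simpa using h1 i
          _ = ‖(∑ j, A i j * x j)‖ := by rw [one_mul]; rfl
          _ ≤ ∑ j, ‖(A i j * x j)‖ := norm_sum_le _ _
          _ ≤ ∑ j, ‖(A i j)‖ := by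
              refine Finset.sum_le_sum fun j _ => ?_
              rw [norm_mul]
              calc ‖(A i j)‖ * ‖(x j)‖ ≤ ‖(A i j)‖ * 1 := by
                    gcongr; exact h1 j
                _ = _ := mul_one _

lemma nr_nonneg (A : Matrix ι ι ℂ) : 0 ≤ numRadius A :=
  Real.sSup_nonneg (by rintro r ⟨x, hx, rfl⟩; exact norm_nonneg _)

lemma abs_dot_le_nr (A : Matrix ι ι ℂ) (x : EuclideanSpace ℂ ι) (hx : ‖x‖ = 1) :
    ‖(dotProduct (star (x : ι → ℂ)) (A.mulVec x))‖ ≤ numRadius A :=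
  le_csSup (nr_bddAbove A) ⟨x, hx, rfl⟩

lemma nr_le (A : Matrix ι ι ℂ) (c : ℝ) (hc : 0 ≤ c)
    (h : ∀ x : EuclideanSpace ℂ ι, ‖x‖ = 1 →
      ‖(dotProduct (star (x : ι → ℂ)) (A.mulVec x))‖ ≤ c) :
    numRadius A ≤ c :=
  Real.sSup_le (by rintro r ⟨x, hx, rfl⟩; exact h x hx) hc

lemma dot_smul_smul (A : Matrix ι ι ℂ) (c : ℂ) (u : ι → ℂ) :
    dotProduct (star (c • u)) (A.mulVec (c • u)) =
      star c * c * dotProduct (star u) (A.mulVec u) := by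
  simp [dotProduct, Matrix.mulVec, Finset.mul_sum, Finset.sum_mul]
  congr 1; funext i; congr 1; funext j; ring

lemma abs_dot_le_nr_sq (A : Matrix ι ι ℂ) (u : EuclideanSpace ℂ ι) :
    ‖(dotProduct (star (u : ι → ℂ)) (A.mulVec u))‖ ≤ numRadius A * ‖u‖ ^ 2 := by
  rcases eq_or_ne u 0 with rfl | hu
  · simp [dotProduct]
  · have hc : ‖u‖ ≠ 0 := norm_ne_zero_iff.mpr hu
    set v : EuclideanSpace ℂ ι := ((‖u‖ : ℂ)⁻¹) • u with hv
    have hvn : ‖v‖ = 1 := by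
      rw [hv, norm_smul]
      simp [hc]
    have huv : (u : ι → ℂ) = (‖u‖ : ℂ) • (v : ι → ℂ) := by
      rw [hv]
      funext i
      show u i = (‖u‖ : ℂ) • ((‖u‖ : ℂ)⁻¹ • u) i
      rw [PiLp.smul_apply, smul_eq_mul, smul_eq_mul, ← mul_assoc,
        mul_inv_cancel₀ (by exact_mod_cast hc : (‖u‖ : ℂ) ≠ 0), one_mul]
    have key : dotProduct (star (u : ι → ℂ)) (A.mulVec u) =
        star (‖u‖ : ℂ) * (‖u‖ : ℂ) * dotProduct (star (v : ι → ℂ)) (A.mulVec v) := by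
      conv_lhs => rw [huv]
      exact dot_smul_smul A _ _
    rw [key, norm_mul, norm_mul]
    have h1 := abs_dot_le_nr A v hvn
    have : ‖(star (‖u‖ : ℂ))‖ * ‖(‖u‖ : ℂ)‖ = ‖u‖ ^ 2 := by
      simp [Complex.norm_real, abs_of_nonneg (norm_nonneg u), sq]
    rw [this]
    calc ‖u‖ ^ 2 * ‖(dotProduct (star (v : ι → ℂ)) (A.mulVec v))‖
        ≤ ‖u‖ ^ 2 * numRadius A := by gcongr
      _ = numRadius A * ‖u‖ ^ 2 := mul_comm _ _

lemma polar1 (A : Matrix ι ι ℂ) (x y : ι → ℂ) :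
    dotProduct (star x) (A.mulVec y) + dotProduct (star y) (A.mulVec x) =
      (1/2 : ℂ) * (dotProduct (star (x + y)) (A.mulVec (x + y)) -
        dotProduct (star (x - y)) (A.mulVec (x - y))) := by
  simp only [star_add, star_sub, Matrix.mulVec_add, Matrix.mulVec_sub,
    add_dotProduct, sub_dotProduct, dotProduct_add, dotProduct_sub]
  ring

lemma E1 (A : Matrix ι ι ℂ) (x y : EuclideanSpace ℂ ι) :
    ‖(dotProduct (star (x : ι → ℂ)) (A.mulVec y) +
        dotProduct (star (y : ι → ℂ)) (A.mulVec x))‖ ≤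
      numRadius A * (‖x‖ ^ 2 + ‖y‖ ^ 2) := by
  rw [polar1, norm_mul]
  have h1 := abs_dot_le_nr_sq A (x + y)
  have h2 := abs_dot_le_nr_sq A (x - y)
  have hpar : ‖x + y‖ ^ 2 + ‖x - y‖ ^ 2 = 2 * (‖x‖ ^ 2 + ‖y‖ ^ 2) := by
    have := parallelogram_law_with_norm ℂ x y
    nlinarith [this]
  have habs : ‖(1/2 : ℂ)‖ = 1/2 := by norm_num
  rw [habs]
  have h3 : ‖(dotProduct (star ((x : ι → ℂ) + (y : ι → ℂ))) (A.mulVec ((x : ι → ℂ) + (y : ι → ℂ))) -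
        dotProduct (star ((x : ι → ℂ) - (y : ι → ℂ))) (A.mulVec ((x : ι → ℂ) - (y : ι → ℂ))))‖ ≤
      numRadius A * ‖x + y‖ ^ 2 + numRadius A * ‖x - y‖ ^ 2 := by
    calc _ ≤ ‖(dotProduct (star ((x : ι → ℂ) + (y : ι → ℂ))) (A.mulVec ((x : ι → ℂ) + (y : ι → ℂ))))‖
            + ‖(dotProduct (star ((x : ι → ℂ) - (y : ι → ℂ))) (A.mulVec ((x : ι → ℂ) - (y : ι → ℂ))))‖ :=
        norm_sub_le _ _
      _ ≤ _ := add_le_add h1 h2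
  calc (1/2 : ℝ) * ‖_‖ ≤ (1/2) * (numRadius A * ‖x + y‖ ^ 2 + numRadius A * ‖x - y‖ ^ 2) := by
        have h0 : (0:ℝ) ≤ 1/2 := by norm_num
        exact mul_le_mul_of_nonneg_left h3 h0
    _ = numRadius A * (‖x + y‖ ^ 2 + ‖x - y‖ ^ 2) / 2 := by ring
    _ = numRadius A * (‖x‖ ^ 2 + ‖y‖ ^ 2) := by rw [hpar]; ring

lemma E2 (A : Matrix ι ι ℂ) (x y : EuclideanSpace ℂ ι) :
    ‖(dotProduct (star (x : ι → ℂ)) (A.mulVec y) -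
        dotProduct (star (y : ι → ℂ)) (A.mulVec x))‖ ≤
      numRadius A * (‖x‖ ^ 2 + ‖y‖ ^ 2) := by
  set y' : EuclideanSpace ℂ ι := Complex.I • y with hy'
  have hn : ‖y'‖ = ‖y‖ := by
    rw [hy', norm_smul]
    simp
  have key : dotProduct (star (x : ι → ℂ)) (A.mulVec y') +
      dotProduct (star (y' : ι → ℂ)) (A.mulVec x) =
      Complex.I * (dotProduct (star (x : ι → ℂ)) (A.mulVec y) -
        dotProduct (star (y : ι → ℂ)) (A.mulVec x)) := by
    show dotProduct (star (x : ι → ℂ)) (A.mulVec (Complex.I • (y : ι → ℂ))) +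
      dotProduct (star (Complex.I • (y : ι → ℂ))) (A.mulVec x) = _
    rw [Matrix.mulVec_smul, dotProduct_smul, star_smul, smul_dotProduct]
    simp only [Complex.star_def, Complex.conj_I, smul_eq_mul]
    ring
  have h := E1 A x y'
  rw [key, norm_mul, Complex.norm_I, one_mul, hn] at h
  exact h

lemma block_dot {n : ℕ} (X Y : Matrix (Fin n) (Fin n) ℂ) (u w : Fin n → ℂ) :
    dotProduct (star (Sum.elim u w))
      ((Matrix.fromBlocks 0 X Y 0).mulVec (Sum.elim u w)) =
      dotProduct (star u) (X.mulVec w) + dotProduct (star w) (Y.mulVec u) := by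
  have hstar : star (Sum.elim u w) = Sum.elim (star u) (star w) := by
    funext i; cases i <;> rfl
  rw [Matrix.fromBlocks_mulVec, hstar]
  simp [sumElim_dotProduct_sumElim]

lemma norm_sq_eq (x : EuclideanSpace ℂ ι) : ‖x‖ ^ 2 = ∑ i, ‖x i‖ ^ 2 := by
  rw [EuclideanSpace.norm_eq, Real.sq_sqrt]
  exact Finset.sum_nonneg fun i _ => sq_nonneg _

lemma elim_norm_sq {n : ℕ} (u w : EuclideanSpace ℂ (Fin n)) :
    ‖(WithLp.equiv 2 ((Fin n ⊕ Fin n) → ℂ)).symm (Sum.elim (u : Fin n → ℂ) w)‖ ^ 2 =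
      ‖u‖ ^ 2 + ‖w‖ ^ 2 := by
  rw [norm_sq_eq, norm_sq_eq u, norm_sq_eq w, Fintype.sum_sum_type]
  simp [WithLp.equiv_symm_apply, PiLp.toLp_apply]


theorem stmt_16 {n : ℕ} (X Y : Matrix (Fin n) (Fin n) ℂ) :
    max (numRadius (X + Y)) (numRadius (X - Y)) / 2 ≤
        numRadius (Matrix.fromBlocks 0 X Y 0) ∧
      numRadius (Matrix.fromBlocks 0 X Y 0) ≤
        (numRadius (X + Y) + numRadius (X - Y)) / 2 := by
  set T := Matrix.fromBlocks 0 X Y 0 with hT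
  have hTnn : 0 ≤ numRadius T := nr_nonneg T
  constructor
  · -- lower bound
    have low1 : numRadius (X + Y) ≤ 2 * numRadius T := by
      refine nr_le _ _ (by positivity) fun x hx => ?_
      set z : EuclideanSpace ℂ (Fin n ⊕ Fin n) :=
        (WithLp.equiv 2 ((Fin n ⊕ Fin n) → ℂ)).symm (Sum.elim (x : Fin n → ℂ) x) with hzdef
    -- norm of z
      have hz2 : ‖z‖ ^ 2 = 2 := by
        rw [hzdef, elim_norm_sq x x, hx]; norm_num
      have hz : (z : (Fin n ⊕ Fin n) → ℂ) = Sum.elim (x : Fin n → ℂ) x := by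
        funext i; rw [hzdef]; rfl
      have h := abs_dot_le_nr_sq T z
      rw [hz2] at h
      rw [hz, hT, block_dot] at h
      have hval : dotProduct (star (x : Fin n → ℂ)) (X.mulVec x) +
          dotProduct (star (x : Fin n → ℂ)) (Y.mulVec x) =
          dotProduct (star (x : Fin n → ℂ)) ((X + Y).mulVec x) := by
        rw [Matrix.add_mulVec, dotProduct_add]
      rw [hval] at h
      linarith
    have low2 : numRadius (X - Y) ≤ 2 * numRadius T := by
      refine nr_le _ _ (by positivity) fun x hx => ?_
      set w : EuclideanSpace ℂ (Fin n) := Complex.I • x with hwdef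
      set z : EuclideanSpace ℂ (Fin n ⊕ Fin n) :=
        (WithLp.equiv 2 ((Fin n ⊕ Fin n) → ℂ)).symm (Sum.elim (x : Fin n → ℂ) w) with hzdef
      have hwn : ‖w‖ = 1 := by rw [hwdef, norm_smul]; simp [hx]
      have hz2 : ‖z‖ ^ 2 = 2 := by
        rw [hzdef, elim_norm_sq x w, hx, hwn]; norm_num
      have hz : (z : (Fin n ⊕ Fin n) → ℂ) = Sum.elim (x : Fin n → ℂ) w := by
        funext i; rw [hzdef]; rfl
      have h := abs_dot_le_nr_sq T z
      rw [hz2] at h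
      rw [hz, hT, block_dot] at h
      have hval : dotProduct (star (x : Fin n → ℂ)) (X.mulVec w) +
          dotProduct (star (w : Fin n → ℂ)) (Y.mulVec x) =
          Complex.I * dotProduct (star (x : Fin n → ℂ)) ((X - Y).mulVec x) := by
        show dotProduct (star (x : Fin n → ℂ)) (X.mulVec (Complex.I • (x : Fin n → ℂ))) +
          dotProduct (star (Complex.I • (x : Fin n → ℂ))) (Y.mulVec x) = _
        rw [Matrix.mulVec_smul, dotProduct_smul, star_smul, smul_dotProduct,
          Matrix.sub_mulVec, dotProduct_sub]
        simp only [Complex.star_def, Complex.conj_I, smul_eq_mul]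
        ring
      rw [hval, norm_mul, Complex.norm_I, one_mul] at h
      linarith
    rw [div_le_iff₀ (by norm_num : (0:ℝ) < 2)]
    rw [max_le_iff]
    constructor <;> linarith
  · -- upper bound
    have hZnn : 0 ≤ numRadius (X + Y) := nr_nonneg _
    have hWnn : 0 ≤ numRadius (X - Y) := nr_nonneg _
    refine nr_le _ _ (by positivity) fun z hz1 => ?_
    set u : EuclideanSpace ℂ (Fin n) :=
      (WithLp.equiv 2 ((Fin n) → ℂ)).symm (fun i => z (Sum.inl i)) with hudef
    set w : EuclideanSpace ℂ (Fin n) :=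
      (WithLp.equiv 2 ((Fin n) → ℂ)).symm (fun i => z (Sum.inr i)) with hwdef
    have hz : (z : (Fin n ⊕ Fin n) → ℂ) = Sum.elim (u : Fin n → ℂ) w := by
      funext i
      cases i with
      | inl i => rw [hudef]; simp [WithLp.equiv_symm_apply, PiLp.toLp_apply]
      | inr i => rw [hwdef]; simp [WithLp.equiv_symm_apply, PiLp.toLp_apply]
    have hnorm : ‖u‖ ^ 2 + ‖w‖ ^ 2 = 1 := by
      have h1 : ‖z‖ ^ 2 = ‖u‖ ^ 2 + ‖w‖ ^ 2 := by
        rw [norm_sq_eq z, norm_sq_eq u, norm_sq_eq w, Fintype.sum_sum_type]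
        simp [hudef, hwdef, WithLp.equiv_symm_apply, PiLp.toLp_apply]
      rw [← h1, hz1]; norm_num
    rw [hT, hz, block_dot]
    have key : dotProduct (star (u : Fin n → ℂ)) (X.mulVec w) +
        dotProduct (star (w : Fin n → ℂ)) (Y.mulVec u) =
        (1/2 : ℂ) * ((dotProduct (star (u : Fin n → ℂ)) ((X + Y).mulVec w) +
            dotProduct (star (w : Fin n → ℂ)) ((X + Y).mulVec u)) +
          (dotProduct (star (u : Fin n → ℂ)) ((X - Y).mulVec w) -
            dotProduct (star (w : Fin n → ℂ)) ((X - Y).mulVec u))) := by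
      simp only [Matrix.add_mulVec, Matrix.sub_mulVec, dotProduct_add,
        dotProduct_sub]
      ring
    rw [key, norm_mul]
    have habs : ‖(1/2 : ℂ)‖ = 1/2 := by norm_num
    rw [habs]
    have h1 := E1 (X + Y) u w
    have h2 := E2 (X - Y) u w
    rw [hnorm, mul_one] at h1 h2
    calc (1/2 : ℝ) * ‖_‖ ≤
        (1/2 : ℝ) * (‖(dotProduct (star (u : Fin n → ℂ)) ((X + Y).mulVec w) +
            dotProduct (star (w : Fin n → ℂ)) ((X + Y).mulVec u))‖ +
          ‖(dotProduct (star (u : Fin n → ℂ)) ((X - Y).mulVec w) -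
            dotProduct (star (w : Fin n → ℂ)) ((X - Y).mulVec u))‖) := by
          have := norm_add_le
            (dotProduct (star (u : Fin n → ℂ)) ((X + Y).mulVec w) +
              dotProduct (star (w : Fin n → ℂ)) ((X + Y).mulVec u))
            (dotProduct (star (u : Fin n → ℂ)) ((X - Y).mulVec w) -
              dotProduct (star (w : Fin n → ℂ)) ((X - Y).mulVec u))
          linarith
      _ ≤ (1/2 : ℝ) * (numRadius (X + Y) + numRadius (X - Y)) := by
          have := add_le_add h1 h2
          linarith
      _ = (numRadius (X + Y) + numRadius (X - Y)) / 2 := by ring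
end
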